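/- arXiv:1506.03263 — 7 statements merged into one kernel-verified Lean document; each statement's English description precedes it below -/
import Mathlib

section
/- Let G be a group and define the maps S, T : G × G → G × G by S(g,x) = (x⁻¹, g^x) and T(g,x) = (g, g⁻¹x). Then for all g, x ∈ G: (i) (S∘S)(g,x) = ((g⁻¹)^{gx}, (x⁻¹)^{gx}); (ii) (S∘S∘S∘S)(g,x) = (g^{[g,x]}, x^{[g,x]}); (iii) (S∘T)∘(S∘T)∘(S∘T) = S∘S as maps on G × G (where S∘T means first apply T, then S). In particular S⁴ and (ST)³·S⁻² act by simultaneous conjugation, so S and T induce an action of SL(2,ℤ) on the set of simultaneous-conjugation classes of pairs. -/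
/-!
`S` commutes with simultaneous conjugation of pairs, and `S²` sends `(g, x)` to `(g⁻¹, x⁻¹)`
conjugated by `gx`. Applying `S²` twice therefore conjugates `(g, x)` first by `g⁻¹x⁻¹` and then
by `gx`, that is, by `[g, x]`. The relation `(ST)³ = S²` is a direct computation, since
`ST (g, x) = (x⁻¹g, g^x)`.
-/

/-- The map `S : (g,x) ↦ (x⁻¹, g^x)` on `G × G`, where `g^x = x⁻¹gx`. -/
def SmapST (G : Type*) [Group G] : G × G → G × G :=
  fun p => (p.2⁻¹, p.2⁻¹ * p.1 * p.2)

/-- The map `T : (g,x) ↦ (g, g⁻¹x)` on `G × G`. -/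
def TmapST (G : Type*) [Group G] : G × G → G × G :=
  fun p => (p.1, p.1⁻¹ * p.2)

section

variable {G : Type*} [Group G]

def conjPair (c : G) (p : G × G) : G × G :=
  (c⁻¹ * p.1 * c, c⁻¹ * p.2 * c)

theorem conjPair_conjPair (c d : G) (p : G × G) :
    conjPair d (conjPair c p) = conjPair (c * d) p := by
  simp only [conjPair, Prod.ext_iff]
  constructor <;> group

theorem SmapST_apply (p : G × G) : SmapST G p = (p.2⁻¹, p.2⁻¹ * p.1 * p.2) := rfl

theorem TmapST_apply (p : G × G) : TmapST G p = (p.1, p.1⁻¹ * p.2) := rfl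

theorem SmapST_conjPair (c : G) (p : G × G) :
    SmapST G (conjPair c p) = conjPair c (SmapST G p) := by
  simp only [SmapST_apply, conjPair, Prod.ext_iff]
  constructor <;> group

theorem SmapST_SmapST (p : G × G) :
    SmapST G (SmapST G p) = conjPair (p.1 * p.2) (p.1⁻¹, p.2⁻¹) := by
  simp only [SmapST_apply, conjPair, Prod.ext_iff]
  constructor <;> group

theorem SmapST_SmapST_SmapST_SmapST (g x : G) :
    SmapST G (SmapST G (SmapST G (SmapST G (g, x)))) = conjPair (g⁻¹ * x⁻¹ * g * x) (g, x) := by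
  rw [SmapST_SmapST (g, x), SmapST_conjPair, SmapST_conjPair, SmapST_SmapST, conjPair_conjPair]
  simp only [inv_inv, mul_assoc]

theorem SmapST_TmapST (p : G × G) :
    SmapST G (TmapST G p) = (p.2⁻¹ * p.1, p.2⁻¹ * p.1 * p.2) := by
  simp only [SmapST_apply, TmapST_apply, Prod.ext_iff]
  constructor <;> group

theorem SmapST_comp_TmapST_cube :
    (SmapST G ∘ TmapST G) ∘ (SmapST G ∘ TmapST G) ∘ (SmapST G ∘ TmapST G) =
      SmapST G ∘ SmapST G := by
  funext p
  simp only [Function.comp_apply, SmapST_TmapST]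
  simp only [SmapST_apply, Prod.ext_iff]
  constructor <;> group

end

/-- (i) `S² (g,x) = ((g⁻¹)^{gx}, (x⁻¹)^{gx})`;
(ii) `S⁴ (g,x) = (g^{[g,x]}, x^{[g,x]})` with `[g,x] = g⁻¹x⁻¹gx`;
(iii) `(S∘T)³ = S²` as maps on `G × G` (where `S∘T` means first apply `T`, then `S`). -/
theorem SL2Z_relations_on_pairs (G : Type*) [Group G] (g x : G) :
    (SmapST G ∘ SmapST G) (g, x) =
      ((g * x)⁻¹ * g⁻¹ * (g * x), (g * x)⁻¹ * x⁻¹ * (g * x)) ∧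
    (SmapST G ∘ SmapST G ∘ SmapST G ∘ SmapST G) (g, x) =
      ((g⁻¹ * x⁻¹ * g * x)⁻¹ * g * (g⁻¹ * x⁻¹ * g * x),
       (g⁻¹ * x⁻¹ * g * x)⁻¹ * x * (g⁻¹ * x⁻¹ * g * x)) ∧
    (SmapST G ∘ TmapST G) ∘ (SmapST G ∘ TmapST G) ∘ (SmapST G ∘ TmapST G) =
      SmapST G ∘ SmapST G :=
  ⟨SmapST_SmapST (g, x), SmapST_SmapST_SmapST_SmapST g x, SmapST_comp_TmapST_cube⟩
end

section
/- Let G be a group and define T, U : G × G → G × G by T(h,y) = (h, h⁻¹y) and U(h,y) = (yh, y). Then for all h, y ∈ G: (T∘U)(h,y) = (yh, h⁻¹); (T∘U)³(h,y) = (h⁻¹·[y,h], (y⁻¹)^h); and (T∘U)⁶(h,y) = (h^{[y,h]}, y^{[y,h]}) = ([y,h]⁻¹·h·[y,h], [y,h]⁻¹·y·[y,h]). (Here f∘g means first apply g, then f; the sixth power realizes the Dehn twist along a genus-1 separating curve.) -/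
/-- The map `T : (h,y) ↦ (h, h⁻¹y)` on `G × G`. -/
def TmapTU (G : Type*) [Group G] : G × G → G × G :=
  fun p => (p.1, p.1⁻¹ * p.2)

/-- The map `U : (h,y) ↦ (yh, y)` on `G × G`. -/
def UmapTU (G : Type*) [Group G] : G × G → G × G :=
  fun p => (p.2 * p.1, p.2)

section

variable {G : Type*} [Group G]

theorem TmapTU_comp_UmapTU_apply (h y : G) :
    (TmapTU G ∘ UmapTU G) (h, y) = (y * h, h⁻¹) := by
  simp [TmapTU, UmapTU]

theorem TmapTU_comp_UmapTU_iterate_three (h y : G) :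
    (TmapTU G ∘ UmapTU G)^[3] (h, y) =
      (h⁻¹ * (y⁻¹ * h⁻¹ * y * h), h⁻¹ * y⁻¹ * h) := by
  simp only [Function.iterate_succ_apply', Function.iterate_zero_apply,
    TmapTU_comp_UmapTU_apply, Prod.mk.injEq]
  constructor <;> group

theorem TmapTU_comp_UmapTU_iterate_six (h y : G) :
    (TmapTU G ∘ UmapTU G)^[6] (h, y) =
      ((y⁻¹ * h⁻¹ * y * h)⁻¹ * h * (y⁻¹ * h⁻¹ * y * h),
       (y⁻¹ * h⁻¹ * y * h)⁻¹ * y * (y⁻¹ * h⁻¹ * y * h)) := by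
  rw [show 6 = 3 + 3 from rfl, Function.iterate_add_apply,
    TmapTU_comp_UmapTU_iterate_three, TmapTU_comp_UmapTU_iterate_three, Prod.mk.injEq]
  constructor <;> group

end

/-- `(T∘U)(h,y) = (yh, h⁻¹)`, `(T∘U)³(h,y) = (h⁻¹·[y,h], (y⁻¹)^h)` and
`(T∘U)⁶(h,y) = (h^{[y,h]}, y^{[y,h]}) = ([y,h]⁻¹·h·[y,h], [y,h]⁻¹·y·[y,h])`,
where `[y,h] = y⁻¹h⁻¹yh` and `a^b = b⁻¹ab`. -/
theorem TU_powers (G : Type*) [Group G] (h y : G) :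
    (TmapTU G ∘ UmapTU G) (h, y) = (y * h, h⁻¹) ∧
    (TmapTU G ∘ UmapTU G)^[3] (h, y) =
      (h⁻¹ * (y⁻¹ * h⁻¹ * y * h), h⁻¹ * y⁻¹ * h) ∧
    (TmapTU G ∘ UmapTU G)^[6] (h, y) =
      ((y⁻¹ * h⁻¹ * y * h)⁻¹ * h * (y⁻¹ * h⁻¹ * y * h),
       (y⁻¹ * h⁻¹ * y * h)⁻¹ * y * (y⁻¹ * h⁻¹ * y * h)) :=
  ⟨TmapTU_comp_UmapTU_apply h y, TmapTU_comp_UmapTU_iterate_three h y,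
    TmapTU_comp_UmapTU_iterate_six h y⟩
end

section
/- Let G be a group and let g, x ∈ G be such that the commutator [x,g] commutes with both g and x. Let k, l, m, n, p, q, r, s be integers with k·n − l·m = 1 and p·s − q·r = 1, and set A = g^k·x^l and B = g^m·x^n. Then there exists z ∈ G with z⁻¹·(A^p·B^q)·z = g^{p·k + q·m}·x^{p·l + q·n} and z⁻¹·(A^r·B^s)·z = g^{r·k + s·m}·x^{r·l + s·n}. (This is the compatibility of the SL(2,ℤ)-action (g|x) ↦ (g^a x^b | g^c x^d) on diconjugacy classes with matrix multiplication.) -/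
/-!
With `c = [x,g]` we have `x g = g x c`, and `c` commutes with `g` and `x`, so normal forms `gᵃ xᵇ cᵉ`
multiply as in the integer Heisenberg group: `(gᵃ xᵇ cᵉ)(gᵃ' xᵇ' cᵉ') = gᵃ⁺ᵃ' xᵇ⁺ᵇ' cᵉ⁺ᵉ'⁺ᵇᵃ'`.
Hence `AᵖBᵠ` and `AʳBˢ` are the claimed words times central factors `cᵉ¹`, `cᵉ²`, and conjugation
by `g^α x^β` adds `bα − βa` to the exponent of `c` in `gᵃ xᵇ cᵉ`. The exponent vectors of the two
words form a matrix of determinant `(ps − qr)(kn − lm) = 1`, so one `(α, β)` cancels both factors.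
-/

section CentralCommutator

variable {G : Type*} [Group G] {g x c : G}

theorem mul_zpow_of_swap (hcg : Commute c g) (hcx : Commute c x)
    (hxg : x * g = g * x * c) (a : ℤ) : x * g ^ a = g ^ a * x * c ^ a := by
  have hconj : x * g * x⁻¹ = g * c := by
    rw [hxg, mul_assoc g, mul_assoc, ← hcx.eq, mul_inv_cancel_right]
  have hconj_zpow : x * g ^ a * x⁻¹ = g ^ a * c ^ a := by
    rw [← conj_zpow, hconj, hcg.symm.mul_zpow]
  rw [mul_inv_eq_iff_eq_mul.mp hconj_zpow, mul_assoc, (hcx.zpow_left a).eq, ← mul_assoc]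

theorem zpow_mul_of_swap (hcx : Commute c x) (hxg : x * g = g * x * c) (b : ℤ) :
    x ^ b * g = g * x ^ b * c ^ b := by
  have hconj : g⁻¹ * x * g = x * c := by
    rw [mul_assoc, hxg, mul_assoc, inv_mul_cancel_left]
  have hconj_zpow : g⁻¹ * x ^ b * g = x ^ b * c ^ b := by
    simpa only [inv_inv, hconj, hcx.symm.mul_zpow] using
      (conj_zpow (a := g⁻¹) (b := x) (i := b)).symm
  rw [mul_assoc g, ← hconj_zpow]
  group

theorem zpow_mul_zpow_of_swap (hcg : Commute c g) (hcx : Commute c x)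
    (hxg : x * g = g * x * c) (a b : ℤ) : x ^ b * g ^ a = g ^ a * x ^ b * c ^ (b * a) := by
  rw [zpow_mul]
  exact mul_zpow_of_swap (hcg.zpow_left b) (hcx.zpow_zpow b b) (zpow_mul_of_swap hcx hxg b) a

theorem normalForm_mul (hcg : Commute c g) (hcx : Commute c x) (hxg : x * g = g * x * c)
    (a b e a' b' e' : ℤ) :
    g ^ a * x ^ b * c ^ e * (g ^ a' * x ^ b' * c ^ e') =
      g ^ (a + a') * x ^ (b + b') * c ^ (e + e' + b * a') := by
  have hce : Commute (c ^ e) (g ^ a' * x ^ b') :=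
    (hcg.zpow_zpow e a').mul_right (hcx.zpow_zpow e b')
  calc g ^ a * x ^ b * c ^ e * (g ^ a' * x ^ b' * c ^ e')
      = g ^ a * x ^ b * (c ^ e * (g ^ a' * x ^ b')) * c ^ e' := by group
    _ = g ^ a * (x ^ b * g ^ a') * x ^ b' * c ^ e * c ^ e' := by rw [hce.eq]; group
    _ = g ^ a * g ^ a' * x ^ b * (c ^ (b * a') * x ^ b') * c ^ e * c ^ e' := by
      rw [zpow_mul_zpow_of_swap hcg hcx hxg]; group
    _ = _ := by rw [(hcx.zpow_zpow _ _).eq]; group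

theorem normalForm_inv (hcg : Commute c g) (hcx : Commute c x) (hxg : x * g = g * x * c)
    (a b : ℤ) : (g ^ a * x ^ b)⁻¹ = g ^ (-a) * x ^ (-b) * c ^ (a * b) := by
  rw [mul_inv_rev, ← zpow_neg, ← zpow_neg, zpow_mul_zpow_of_swap hcg hcx hxg, neg_mul_neg,
    mul_comm]

theorem exists_normalForm_zpow (hcg : Commute c g) (hcx : Commute c x)
    (hxg : x * g = g * x * c) (a b p : ℤ) :
    ∃ e : ℤ, (g ^ a * x ^ b) ^ p = g ^ (p * a) * x ^ (p * b) * c ^ e := by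
  have hgx : g ^ a * x ^ b = g ^ a * x ^ b * c ^ (0 : ℤ) := by rw [zpow_zero, mul_one]
  induction p using Int.induction_on with
  | zero => exact ⟨0, by simp⟩
  | succ t ih =>
    obtain ⟨e, he⟩ := ih
    exact ⟨_, by
      rw [zpow_add_one, he, hgx, normalForm_mul hcg hcx hxg, add_one_mul, add_one_mul]⟩
  | pred t ih =>
    obtain ⟨e, he⟩ := ih
    exact ⟨_, by rw [zpow_sub_one, he, normalForm_inv hcg hcx hxg, normalForm_mul hcg hcx hxg,
      sub_one_mul, sub_one_mul, sub_eq_add_neg, sub_eq_add_neg]⟩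

theorem normalForm_conj (hcg : Commute c g) (hcx : Commute c x) (hxg : x * g = g * x * c)
    (α β a b e : ℤ) :
    (g ^ α * x ^ β)⁻¹ * (g ^ a * x ^ b * c ^ e) * (g ^ α * x ^ β) =
      g ^ a * x ^ b * c ^ (e + b * α - β * a) := by
  have h := normalForm_mul hcg hcx hxg (-α + a) (-β + b) (α * β + e + -β * a) α β 0
  rw [zpow_zero, mul_one] at h
  rw [normalForm_inv hcg hcx hxg, normalForm_mul hcg hcx hxg, h]
  group

theorem exists_normalForm_zpow_mul_zpow (hcg : Commute c g) (hcx : Commute c x)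
    (hxg : x * g = g * x * c) (k l m n p q : ℤ) :
    ∃ e : ℤ, (g ^ k * x ^ l) ^ p * (g ^ m * x ^ n) ^ q =
      g ^ (p * k + q * m) * x ^ (p * l + q * n) * c ^ e := by
  obtain ⟨e, he⟩ := exists_normalForm_zpow hcg hcx hxg k l p
  obtain ⟨e', he'⟩ := exists_normalForm_zpow hcg hcx hxg m n q
  exact ⟨_, by rw [he, he', normalForm_mul hcg hcx hxg]⟩

theorem exists_conj_normalForm_of_det_eq_one (hcg : Commute c g) (hcx : Commute c x)
    (hxg : x * g = g * x * c) {a₁ b₁ a₂ b₂ : ℤ} (hdet : a₁ * b₂ - b₁ * a₂ = 1) (e₁ e₂ : ℤ) :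
    ∃ z : G, z⁻¹ * (g ^ a₁ * x ^ b₁ * c ^ e₁) * z = g ^ a₁ * x ^ b₁ ∧
      z⁻¹ * (g ^ a₂ * x ^ b₂ * c ^ e₂) * z = g ^ a₂ * x ^ b₂ := by
  -- Cramer's rule for `e₁ + b₁ α - a₁ β = 0`, `e₂ + b₂ α - a₂ β = 0`
  refine ⟨g ^ (a₂ * e₁ - a₁ * e₂) * x ^ (b₂ * e₁ - b₁ * e₂), ?_, ?_⟩
  · rw [normalForm_conj hcg hcx hxg,
      show e₁ + b₁ * (a₂ * e₁ - a₁ * e₂) - (b₂ * e₁ - b₁ * e₂) * a₁ = 0 by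
        linear_combination (-e₁) * hdet, zpow_zero, mul_one]
  · rw [normalForm_conj hcg hcx hxg,
      show e₂ + b₂ * (a₂ * e₁ - a₁ * e₂) - (b₂ * e₁ - b₁ * e₂) * a₂ = 0 by
        linear_combination (-e₂) * hdet, zpow_zero, mul_one]

end CentralCommutator

/-- Compatibility of the `SL(2,ℤ)`-action `(g|x) ↦ (gᵃxᵇ | gᶜxᵈ)` on diconjugacy
classes with matrix multiplication: if `[x,g] = x⁻¹g⁻¹xg` commutes with both `g`
and `x`, `kn − lm = 1`, `ps − qr = 1`, `A = gᵏxˡ` and `B = gᵐxⁿ`, then the pair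
`(AᵖBᵠ, AʳBˢ)` is simultaneously conjugate to
`(g^{pk+qm} x^{pl+qn}, g^{rk+sm} x^{rl+sn})`. -/
theorem SL2Z_action_compatible {G : Type*} [Group G] (g x : G)
    (hg : Commute (x⁻¹ * g⁻¹ * x * g) g) (hx : Commute (x⁻¹ * g⁻¹ * x * g) x)
    (k l m n p q r s : ℤ) (h1 : k * n - l * m = 1) (h2 : p * s - q * r = 1) :
    ∃ z : G,
      z⁻¹ * ((g ^ k * x ^ l) ^ p * (g ^ m * x ^ n) ^ q) * z =
        g ^ (p * k + q * m) * x ^ (p * l + q * n) ∧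
      z⁻¹ * ((g ^ k * x ^ l) ^ r * (g ^ m * x ^ n) ^ s) * z =
        g ^ (r * k + s * m) * x ^ (r * l + s * n) := by
  have hxg : x * g = g * x * (x⁻¹ * g⁻¹ * x * g) := by group
  obtain ⟨e₁, he₁⟩ := exists_normalForm_zpow_mul_zpow hg hx hxg k l m n p q
  obtain ⟨e₂, he₂⟩ := exists_normalForm_zpow_mul_zpow hg hx hxg k l m n r s
  have hdet : (p * k + q * m) * (r * l + s * n) - (p * l + q * n) * (r * k + s * m) = 1 := by
    linear_combination (p * s - q * r) * h1 + h2
  rw [he₁, he₂]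
  exact exists_conj_normalForm_of_det_eq_one hg hx hxg hdet e₁ e₂
end

section
/- Let G be a group. (i) For all g, x ∈ G and every integer m, the pairs (x^{−m}, (g^x)^m) and (x^{−m}, (g^m)^{x^m}) are simultaneously conjugate: there exists z ∈ G with z⁻¹·x^{−m}·z = x^{−m} and z⁻¹·(g^x)^m·z = (g^m)^{x^m}. (ii) If moreover G is finite, m is a natural number coprime to the exponent of G, and [x,g] commutes with both g and x, then the pairs (g^m, (g⁻¹x)^m) and (g^m, g^{−m}·x^m) are simultaneously conjugate. (This is the equivariance of the power map p_m with S and T on diconjugacy classes.) -/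
/-!
For (i), conjugation by `x ^ (m - 1)` fixes `x ^ (-m)` and carries `(g ^ x) ^ m = (g ^ m) ^ x` to
`(g ^ m) ^ (x ^ m)`.

For (ii), put `c = [x, g]`, so that `x * g = g * x * c` with `c` commuting with `g` and `x`.
Then conjugation by `g ^ k` sends `g⁻¹ * x` to `g⁻¹ * x * c ^ k`, while the class-two power
formula gives `(g⁻¹ * x) ^ m = g ^ (-m) * x ^ m * c ^ (-(m choose 2))`. As `m` is invertible
modulo the exponent, `c ^ (m choose 2)` is an `m`-th power `(c ^ k) ^ m` with `k` a multiple of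
`m choose 2`, and `z = g ^ k` does the job.
-/

theorem Monoid.exists_pow_pow_eq_self_of_coprime_exponent {M : Type*} [Monoid M] {m : ℕ}
    (hm : m.Coprime (Monoid.exponent M)) : ∃ m' : ℕ, ∀ y : M, (y ^ m') ^ m = y := by
  refine ⟨((m : ZMod (Monoid.exponent M))⁻¹).val, fun y => ?_⟩
  have hinv : ((m : ZMod (Monoid.exponent M))⁻¹).val * m ≡ 1 [MOD Monoid.exponent M] :=
    (ZMod.natCast_eq_natCast_iff _ _ _).1 (by push_cast; exact ZMod.val_inv_mul hm)
  rw [← pow_mul, pow_eq_pow_of_modEq hinv (Monoid.pow_exponent_eq_one y), pow_one]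

section ClassTwo

variable {G : Type*} [Group G] {a b d : G}

theorem mul_zpow_eq_zpow_mul_mul_zpow (h : a * b = b * a * d) (hda : Commute d a)
    (hdb : Commute d b) (n : ℤ) : a * b ^ n = b ^ n * a * d ^ n := by
  have hconj : a * b * a⁻¹ = b * d := by
    rw [h, mul_assoc b, ← hda.eq, ← mul_assoc, mul_inv_cancel_right]
  calc a * b ^ n = (a * b * a⁻¹) ^ n * a := by rw [conj_zpow, inv_mul_cancel_right]
    _ = b ^ n * a * d ^ n := by
      rw [hconj, hdb.symm.mul_zpow, mul_assoc, (hda.zpow_left n).eq, mul_assoc]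

theorem mul_pow_eq_pow_mul_pow_mul_pow_choose (h : a * b = b * a * d) (hda : Commute d a)
    (hdb : Commute d b) (n : ℕ) : (b * a) ^ n = b ^ n * a ^ n * d ^ n.choose 2 := by
  induction n with
  | zero => simp
  | succ n ih =>
    have hab : a * b ^ n = b ^ n * a * d ^ n := by
      exact_mod_cast mul_zpow_eq_zpow_mul_mul_zpow h hda hdb n
    calc (b * a) ^ (n + 1) = b * (a * b ^ n) * a ^ n * d ^ n.choose 2 := by
          rw [pow_succ', ih]; group
      _ = b ^ (n + 1) * a * (d ^ n * a ^ n) * d ^ n.choose 2 := by rw [hab]; group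
      _ = b ^ (n + 1) * a ^ (n + 1) * d ^ (n + 1).choose 2 := by
          rw [(hda.pow_pow n n).eq, Nat.choose_succ_succ', Nat.choose_one_right]; group

end ClassTwo

section PowerMap

variable {G : Type*} [Group G]

theorem exists_conj_zpow_conj (g x : G) (m : ℤ) :
    ∃ z : G, z⁻¹ * x ^ (-m) * z = x ^ (-m) ∧
      z⁻¹ * (x⁻¹ * g * x) ^ m * z = (x ^ m)⁻¹ * g ^ m * x ^ m := by
  refine ⟨x ^ (m - 1), by group, ?_⟩
  rw [show x⁻¹ * g * x = x⁻¹ * g * x⁻¹⁻¹ by rw [inv_inv], conj_zpow]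
  group

theorem exists_conj_pow_inv_mul {g x : G} {m : ℕ} (hm : m.Coprime (Monoid.exponent G))
    (hcg : Commute (x⁻¹ * g⁻¹ * x * g) g) (hcx : Commute (x⁻¹ * g⁻¹ * x * g) x) :
    ∃ z : G, z⁻¹ * g ^ m * z = g ^ m ∧
      z⁻¹ * (g⁻¹ * x) ^ m * z = (g ^ m)⁻¹ * x ^ m := by
  set c := x⁻¹ * g⁻¹ * x * g
  have hxg : x * g = g * x * c := by simp only [c]; group
  have hxg_zpow (n : ℤ) : x * g ^ n = g ^ n * x * c ^ n :=
    mul_zpow_eq_zpow_mul_mul_zpow hxg hcx hcg n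
  have hpow : (g⁻¹ * x) ^ m = (g ^ m)⁻¹ * x ^ m * (c ^ m.choose 2)⁻¹ := by
    have hxg_inv : x * g⁻¹ = g⁻¹ * x * c⁻¹ := by simpa using hxg_zpow (-1)
    simpa [inv_pow] using
      mul_pow_eq_pow_mul_pow_mul_pow_choose hxg_inv hcx.inv_left hcg.inv_left.inv_right m
  obtain ⟨m', hm'⟩ := Monoid.exists_pow_pow_eq_self_of_coprime_exponent hm
  set k := m.choose 2 * m'
  have hconj : (g ^ k)⁻¹ * (g⁻¹ * x) * g ^ k = g⁻¹ * x * c ^ k := by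
    calc (g ^ k)⁻¹ * (g⁻¹ * x) * g ^ k = g⁻¹ * (g ^ k)⁻¹ * (x * g ^ k) := by group
      _ = g⁻¹ * x * c ^ k := by
        rw [← zpow_natCast, hxg_zpow, zpow_natCast, zpow_natCast]; group
  refine ⟨g ^ k, by group, ?_⟩
  calc (g ^ k)⁻¹ * (g⁻¹ * x) ^ m * g ^ k = ((g ^ k)⁻¹ * (g⁻¹ * x) * g ^ k) ^ m := by
        simpa using (conj_pow (i := m) (a := (g ^ k)⁻¹) (b := g⁻¹ * x)).symm
    _ = (g⁻¹ * x) ^ m * (c ^ k) ^ m := by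
        rw [hconj, ((hcg.inv_right.mul_right hcx).pow_left k).symm.mul_pow]
    _ = (g ^ m)⁻¹ * x ^ m := by rw [pow_mul, hm', hpow, inv_mul_cancel_right]

end PowerMap

/-- Equivariance of the power map `p_m` with `S` and `T` on diconjugacy classes:
(i) for all `g, x` and every integer `m`, the pairs `(x^{−m}, (g^x)^m)` and
`(x^{−m}, (g^m)^{x^m})` are simultaneously conjugate;
(ii) if `G` is finite, `m` is a natural number coprime to the exponent of `G`, and
`[x,g] = x⁻¹g⁻¹xg` commutes with both `g` and `x`, then the pairs
`(g^m, (g⁻¹x)^m)` and `(g^m, g^{−m}x^m)` are simultaneously conjugate. -/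
theorem power_map_equivariance {G : Type*} [Group G] :
    (∀ (g x : G) (m : ℤ), ∃ z : G,
        z⁻¹ * x ^ (-m) * z = x ^ (-m) ∧
        z⁻¹ * (x⁻¹ * g * x) ^ m * z = (x ^ m)⁻¹ * g ^ m * x ^ m) ∧
    (Finite G → ∀ (g x : G) (m : ℕ), Nat.Coprime m (Monoid.exponent G) →
        Commute (x⁻¹ * g⁻¹ * x * g) g → Commute (x⁻¹ * g⁻¹ * x * g) x →
        ∃ z : G,
          z⁻¹ * g ^ m * z = g ^ m ∧
          z⁻¹ * (g⁻¹ * x) ^ m * z = (g ^ m)⁻¹ * x ^ m) :=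
  ⟨exists_conj_zpow_conj, fun _ _ _ _ hm hcg hcx => exists_conj_pow_inv_mul hm hcg hcx⟩
end

section
/- Let N ≥ 1 and let v, w : (Fin N ⊕ Fin N) → ℤ be integer vectors. Then there exists a matrix M in the integral symplectic group Sp(2N,ℤ) with M.mulVec v = w if and only if the (nonnegative) greatest common divisor of the entries of v equals the greatest common divisor of the entries of w. In particular every Sp(2N,ℤ)-orbit on ℤ^{2N} contains the vector whose first entry is the gcd of the entries and whose other entries are 0. -/
/-!
`Sp(2N, ℤ)` contains the block matrices `[[diag a, diag b], [diag c, diag d]]` with every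
`[[a k, b k], [c k, d k]]` in `SL(2, ℤ)`, and the matrices `diag(A, A⁻ᵀ)` with `A ∈ GL(N, ℤ)`.
With Bézout coefficients, the first kind clears the second half of a vector; the second kind,
a product of Bézout steps on pairs of coordinates, then moves the first half to `c • e₀`.
Multiplication by an integer matrix can only enlarge the gcd of the entries, so the gcd is an
orbit invariant; hence `c = ± gcd`, and `-1 ∈ Sp(2N, ℤ)` fixes the sign.
-/

open Matrix Function

variable {ι R : Type*} [DecidableEq ι]

theorem Int.exists_mul_sub_mul_eq_one_and_mul_add_mul_eq_zero (a b : ℤ) :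
    ∃ p q r s : ℤ, p * s - q * r = 1 ∧ r * a + s * b = 0 := by
  rcases (Int.gcd a b).eq_zero_or_pos with h | h
  · obtain ⟨rfl, rfl⟩ := Int.gcd_eq_zero_iff.mp h
    exact ⟨1, 0, 0, 1, by ring, by ring⟩
  obtain ⟨g, a', b', -, hab', rfl, rfl⟩ := Int.exists_gcd_one' h
  obtain ⟨u, w, huw⟩ := Int.isCoprime_iff_gcd_eq_one.mpr hab'
  exact ⟨u, w, -b', a', by linear_combination huw, by ring⟩

theorem Finset.gcd_dvd_gcd_mulVec {m n : Type*} [Fintype m] [Fintype n] [CommRing R]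
    [IsDomain R] [NormalizedGCDMonoid R] (M : Matrix m n R) (v : n → R) :
    Finset.univ.gcd v ∣ Finset.univ.gcd (M *ᵥ v) :=
  Finset.dvd_gcd fun _ _ => Finset.dvd_sum fun j _ =>
    (Finset.gcd_dvd (Finset.mem_univ j)).mul_left _

theorem Finset.gcd_univ_single {m : Type*} [Fintype m] [DecidableEq m] [CommRing R]
    [IsDomain R] [NormalizedGCDMonoid R] (k : m) (c : R) :
    Finset.univ.gcd (Pi.single k c) = normalize c := by
  refine dvd_antisymm_of_normalize_eq Finset.normalize_gcd (normalize_idem c) ?_ ?_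
  · simpa using Finset.gcd_dvd (f := Pi.single k c) (Finset.mem_univ k)
  · refine normalize_dvd_iff.mpr (Finset.dvd_gcd fun l _ => ?_)
    rcases eq_or_ne l k with rfl | hl
    · simp
    · simp [hl]

section PairLinearEquiv

variable [CommRing R] {i j : ι} {p q r s : R}

def pairLinearMap (i j : ι) (p q r s : R) : (ι → R) →ₗ[R] ι → R where
  toFun x := update (update x i (p * x i + q * x j)) j (r * x i + s * x j)
  map_add' x y := by ext k; simp only [update_apply, Pi.add_apply]; split_ifs <;> ring
  map_smul' c x := by
    ext k; simp only [update_apply, Pi.smul_apply, smul_eq_mul, RingHom.id_apply]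
    split_ifs <;> ring

theorem pairLinearMap_comp_pairLinearMap (hij : i ≠ j) (h : p * s - q * r = 1) :
    pairLinearMap i j s (-q) (-r) p ∘ₗ pairLinearMap i j p q r s = LinearMap.id := by
  refine LinearMap.ext fun x => funext fun k => ?_
  simp only [LinearMap.comp_apply, pairLinearMap, LinearMap.coe_mk, AddHom.coe_mk, update_apply,
    LinearMap.id_apply, hij, if_true, if_false]
  split_ifs with hkj hki
  · subst hkj; linear_combination x k * h
  · subst hki; linear_combination x k * h
  · rfl

def pairLinearEquiv (hij : i ≠ j) (h : p * s - q * r = 1) : (ι → R) ≃ₗ[R] ι → R :=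
  .ofLinearMap (pairLinearMap i j p q r s) (pairLinearMap i j s (-q) (-r) p)
    (by
      have h' : s * p - -q * -r = 1 := by linear_combination h
      simpa using pairLinearMap_comp_pairLinearMap hij h')
    (pairLinearMap_comp_pairLinearMap hij h)

theorem pairLinearEquiv_apply_right (hij : i ≠ j) (h : p * s - q * r = 1) (x : ι → R) :
    pairLinearEquiv hij h x j = r * x i + s * x j := by
  simp [pairLinearEquiv, pairLinearMap]

theorem pairLinearEquiv_apply_of_ne (hij : i ≠ j) (h : p * s - q * r = 1) (x : ι → R) {k : ι}
    (hki : k ≠ i) (hkj : k ≠ j) : pairLinearEquiv hij h x k = x k := by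
  simp [pairLinearEquiv, pairLinearMap, hki, hkj]

end PairLinearEquiv

variable [Fintype ι]

theorem exists_linearEquiv_apply_eq_single (i₀ : ι) (x : ι → ℤ) :
    ∃ (e : (ι → ℤ) ≃ₗ[ℤ] ι → ℤ) (c : ℤ), e x = Pi.single i₀ c := by
  suffices ∀ t : Finset ι, ∃ e : (ι → ℤ) ≃ₗ[ℤ] ι → ℤ, ∀ j ∈ t, j ≠ i₀ → e x j = 0 by
    obtain ⟨e, he⟩ := this Finset.univ
    refine ⟨e, e x i₀, funext fun k => ?_⟩
    by_cases hk : k = i₀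
    · simp [hk]
    · simp [hk, he k (Finset.mem_univ k) hk]
  intro t
  induction t using Finset.induction_on with
  | empty => exact ⟨LinearEquiv.refl ℤ _, by simp⟩
  | @insert j t hjt ih =>
    obtain ⟨e, he⟩ := ih
    by_cases hj : j = i₀
    · exact ⟨e, fun k hk hki => he k ((Finset.mem_insert.mp hk).resolve_left (hj ▸ hki)) hki⟩
    obtain ⟨p, q, r, s, hdet, hkill⟩ :=
      Int.exists_mul_sub_mul_eq_one_and_mul_add_mul_eq_zero (e x i₀) (e x j)
    have hij : i₀ ≠ j := Ne.symm hj
    refine ⟨e.trans (pairLinearEquiv hij hdet), fun k hk hki => ?_⟩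
    rw [LinearEquiv.trans_apply]
    rcases Finset.mem_insert.mp hk with rfl | hkt
    · rw [pairLinearEquiv_apply_right, hkill]
    · have hkj : k ≠ j := fun hkj => hjt (hkj ▸ hkt)
      rw [pairLinearEquiv_apply_of_ne hij hdet _ hki hkj, he k hkt hki]

namespace SymplecticGroup

section CommRing

variable [CommRing R]

theorem fromBlocks_diagonal_mem {a b c d : ι → R} (h : ∀ k, a k * d k - b k * c k = 1) :
    fromBlocks (diagonal a) (diagonal b) (diagonal c) (diagonal d) ∈ symplecticGroup ι R := by
  refine fromBlocks_mem_iff.mpr ⟨?_, ?_, ?_⟩ <;>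
    simp only [diagonal_transpose, diagonal_mul_diagonal, mul_comm]
  rw [diagonal_sub, ← diagonal_one]
  congr 1
  funext k
  simpa [mul_comm] using h k

theorem fromBlocks_toMatrix'_mem (e : (ι → R) ≃ₗ[R] ι → R) :
    fromBlocks (LinearMap.toMatrix' e) 0 0 (LinearMap.toMatrix' e.symm)ᵀ ∈
      symplecticGroup ι R := by
  refine fromBlocks_mem_iff.mpr ⟨by simp, by simp, ?_⟩
  rw [transpose_zero, Matrix.zero_mul, sub_zero, ← transpose_mul, ← LinearMap.toMatrix'_comp,
    LinearEquiv.symm_comp, LinearMap.toMatrix'_id, transpose_one]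

def SameOrbit (v w : ι ⊕ ι → R) : Prop :=
  ∃ M ∈ symplecticGroup ι R, M *ᵥ v = w

theorem SameOrbit.trans {u v w : ι ⊕ ι → R} (huv : SameOrbit u v) (hvw : SameOrbit v w) :
    SameOrbit u w := by
  obtain ⟨M, hM, rfl⟩ := huv
  obtain ⟨M', hM', rfl⟩ := hvw
  exact ⟨M' * M, mul_mem hM' hM, (mulVec_mulVec _ _ _).symm⟩

theorem SameOrbit.symm {v w : ι ⊕ ι → R} (h : SameOrbit v w) : SameOrbit w v := by
  obtain ⟨M, hM, rfl⟩ := h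
  let M' : symplecticGroup ι R := ⟨M, hM⟩
  refine ⟨↑M'⁻¹, (M'⁻¹).2, ?_⟩
  rw [mulVec_mulVec]
  change ((M'⁻¹ * M' : symplecticGroup ι R) : Matrix (ι ⊕ ι) (ι ⊕ ι) R) *ᵥ v = v
  rw [inv_mul_cancel, Submonoid.coe_one, one_mulVec]

theorem sameOrbit_neg (v : ι ⊕ ι → R) : SameOrbit v (-v) :=
  ⟨-1, neg_mem (one_mem _), by rw [neg_mulVec, one_mulVec]⟩

theorem sameOrbit_sum_elim_zero (e : (ι → R) ≃ₗ[R] ι → R) (x : ι → R) :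
    SameOrbit (Sum.elim x 0) (Sum.elim (e x) 0) :=
  ⟨_, fromBlocks_toMatrix'_mem e, by simp [fromBlocks_mulVec, LinearMap.toMatrix'_mulVec]⟩

end CommRing

theorem SameOrbit.gcd_eq [CommRing R] [IsDomain R] [NormalizedGCDMonoid R]
    {v w : ι ⊕ ι → R} (h : SameOrbit v w) : Finset.univ.gcd v = Finset.univ.gcd w := by
  have hdvd {v w : ι ⊕ ι → R} (h : SameOrbit v w) : Finset.univ.gcd v ∣ Finset.univ.gcd w := by
    obtain ⟨M, -, rfl⟩ := h
    exact Finset.gcd_dvd_gcd_mulVec M v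
  exact dvd_antisymm_of_normalize_eq Finset.normalize_gcd Finset.normalize_gcd
    (hdvd h) (hdvd h.symm)

theorem exists_sameOrbit_sum_elim_zero (v : ι ⊕ ι → ℤ) : ∃ x, SameOrbit v (Sum.elim x 0) := by
  choose p q r s hdet hkill using fun k =>
    Int.exists_mul_sub_mul_eq_one_and_mul_add_mul_eq_zero (v (.inl k)) (v (.inr k))
  refine ⟨fun k => p k * v (.inl k) + q k * v (.inr k), _, fromBlocks_diagonal_mem hdet, ?_⟩
  rw [fromBlocks_mulVec]
  congr 1 <;> ext k <;> simp [mulVec_diagonal, hkill]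

theorem exists_sameOrbit_single (i₀ : ι) (v : ι ⊕ ι → ℤ) :
    ∃ c, SameOrbit v (Pi.single (.inl i₀) c) := by
  obtain ⟨x, hx⟩ := exists_sameOrbit_sum_elim_zero v
  obtain ⟨e, c, he⟩ := exists_linearEquiv_apply_eq_single i₀ x
  refine ⟨c, hx.trans ?_⟩
  convert sameOrbit_sum_elim_zero e x using 1
  rw [he]
  funext k
  rcases k with k | k <;> simp [Pi.single_apply]

theorem sameOrbit_single_gcd (i₀ : ι) (v : ι ⊕ ι → ℤ) :
    SameOrbit v (Pi.single (.inl i₀) (Finset.univ.gcd v)) := by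
  obtain ⟨c, hc⟩ := exists_sameOrbit_single i₀ v
  rw [hc.gcd_eq, Finset.gcd_univ_single, ← Int.abs_eq_normalize]
  rcases abs_choice c with h | h
  · rwa [h]
  · rw [h, Pi.single_neg]
    exact hc.trans (sameOrbit_neg _)

end SymplecticGroup

/-- Two integer vectors lie in the same orbit of the integral symplectic group
`Sp(2N,ℤ)` acting on `ℤ^{2N}` by matrix-vector multiplication iff the
(nonnegative) gcds of their entries coincide. -/
theorem symplectic_orbit_iff_gcd {N : ℕ} (hN : 1 ≤ N)
    (v w : (Fin N ⊕ Fin N) → ℤ) :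
    (∃ M ∈ Matrix.symplecticGroup (Fin N) ℤ, M.mulVec v = w) ↔
      Finset.univ.gcd v = Finset.univ.gcd w := by
  let i₀ : Fin N := ⟨0, hN⟩
  refine ⟨SymplecticGroup.SameOrbit.gcd_eq, fun h => ?_⟩
  exact (SymplecticGroup.sameOrbit_single_gcd i₀ v).trans
    (h ▸ (SymplecticGroup.sameOrbit_single_gcd i₀ w).symm)
end

section
/- Let N ≥ 1, let k ≥ 1 be a natural number, and for each index i ∈ Fin N ⊕ Fin N let f i : ZMod k → ZMod k be a bijection; let Φ : ((Fin N ⊕ Fin N) → ZMod k) → ((Fin N ⊕ Fin N) → ZMod k) be the componentwise map Φ(v) i = f i (v i). Then Φ commutes with the action of every matrix M ∈ Sp(2N,ℤ) on (ZMod k)^{2N} (acting by matrix-vector multiplication after reducing the entries of M modulo k) if and only if there exists a unit u ∈ (ZMod k)ˣ such that f i (x) = u·x for all i and all x. -/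
/-!
Equivariance under the symplectic transvections `[[1, B], [0, 1]]` and `[[1, 0], [B, 1]]`, with
`B` the symmetric 0/1 matrix supported on `{(i, j), (j, i)}`, yields the functional equations
`f (inl i) (x + y) = f (inl i) x + f (inr j) y` and `f (inr i) (x + y) = f (inr i) x + f (inl j) y`.
They force all the `f i` to be one additive map `g`. Additive maps of `ZMod k` are
`ZMod k`-linear, so `g x = g 1 * x`, and surjectivity of `g` makes `g 1` a unit.
Conversely, multiplication by a scalar commutes with every matrix.
-/

open Matrix

variable {l R : Type*} [DecidableEq l]

namespace Matrix

def symmSingle (i j : l) : Matrix l l ℤ :=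
  of fun a b => if s(a, b) = s(i, j) then 1 else 0

theorem symmSingle_transpose (i j : l) : (symmSingle i j)ᵀ = symmSingle i j := by
  ext a b
  simp only [symmSingle, transpose_apply, of_apply, Sym2.eq_swap]

variable [Fintype l] [CommRing R]

theorem map_symmSingle_mulVec_apply (i j : l) (w : l → R) :
    ((symmSingle i j).map (Int.cast : ℤ → R) *ᵥ w) i = w j := by
  simp only [symmSingle, mulVec, dotProduct, map_apply, of_apply, Sym2.congr_right,
    apply_ite Int.cast, Int.cast_one, Int.cast_zero, ite_mul, one_mul, zero_mul,
    Finset.sum_ite_eq', Finset.mem_univ, if_true]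

theorem fromBlocks_one_one_zero_one_mem_symplecticGroup {B : Matrix l l R} (hB : Bᵀ = B) :
    fromBlocks 1 B 0 1 ∈ symplecticGroup l R := by
  simp [SymplecticGroup.fromBlocks_mem_iff, hB]

theorem fromBlocks_one_zero_one_one_mem_symplecticGroup {C : Matrix l l R} (hC : Cᵀ = C) :
    fromBlocks 1 0 C 1 ∈ symplecticGroup l R := by
  simp [SymplecticGroup.fromBlocks_mem_iff, hC]

end Matrix

variable [Fintype l] [CommRing R]

def IsSymplecticEquivariant (f : l ⊕ l → R → R) : Prop :=
  ∀ M ∈ symplecticGroup l ℤ, ∀ v : l ⊕ l → R,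
    (fun i => f i ((M.map (Int.cast : ℤ → R)).mulVec v i)) =
      (M.map (Int.cast : ℤ → R)).mulVec (fun i => f i (v i))

theorem isSymplecticEquivariant_const_mul (u : R) :
    IsSymplecticEquivariant (l := l) fun _ x => u * x := by
  intro M _ v
  exact mulVec_smul _ u v |>.symm

namespace IsSymplecticEquivariant

variable {f : l ⊕ l → R → R}

theorem apply_inl_add (h : IsSymplecticEquivariant f) (i j : l) (x y : R) :
    f (.inl i) (x + y) = f (.inl i) x + f (.inr j) y := by
  have := congrFun (h _ (fromBlocks_one_one_zero_one_mem_symplecticGroup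
    (symmSingle_transpose i j)) (Sum.elim (fun _ => x) (fun _ => y))) (.inl i)
  simpa [fromBlocks_map, fromBlocks_mulVec, map_symmSingle_mulVec_apply] using this

theorem apply_inr_add (h : IsSymplecticEquivariant f) (i j : l) (x y : R) :
    f (.inr i) (x + y) = f (.inr i) x + f (.inl j) y := by
  have := congrFun (h _ (fromBlocks_one_zero_one_one_mem_symplecticGroup
    (symmSingle_transpose i j)) (Sum.elim (fun _ => y) (fun _ => x))) (.inr i)
  simpa [fromBlocks_map, fromBlocks_mulVec, map_symmSingle_mulVec_apply, add_comm] using this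

theorem exists_addMonoidHom_eq [Nonempty l]
    (h : IsSymplecticEquivariant f) : ∃ g : R →+ R, ∀ i, f i = g := by
  obtain ⟨i₀⟩ := ‹Nonempty l›
  have inr_zero (j : l) : f (.inr j) 0 = 0 := by
    simpa using h.apply_inl_add i₀ j 0 0
  have inl_zero (j : l) : f (.inl j) 0 = 0 := by
    simpa using h.apply_inr_add i₀ j 0 0
  have inl_eq_inr (i j : l) (y : R) : f (.inl i) y = f (.inr j) y := by
    simpa [inl_zero] using h.apply_inl_add i j 0 y
  have eq_inl (i : l ⊕ l) : f i = f (.inl i₀) := by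
    rcases i with i | i <;> funext y
    · rw [inl_eq_inr i i₀, ← inl_eq_inr i₀ i₀]
    · rw [inl_eq_inr i₀ i]
  refine ⟨AddMonoidHom.mk' (f (.inl i₀)) fun x y => ?_, eq_inl⟩
  rw [h.apply_inl_add i₀ i₀, ← inl_eq_inr]

end IsSymplecticEquivariant

theorem ZMod.addMonoidHom_apply_eq_mul {n : ℕ} (g : ZMod n →+ ZMod n) (x : ZMod n) :
    g x = g 1 * x := by
  simpa [mul_comm] using ZMod.map_smul g x 1

theorem symplectic_equivariant_componentwise_bijections_general {N : ℕ} (hN : 1 ≤ N)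
    (k : ℕ) (f : (Fin N ⊕ Fin N) → ZMod k → ZMod k)
    (hf : ∀ i, Function.Bijective (f i)) :
    (∀ M ∈ Matrix.symplecticGroup (Fin N) ℤ, ∀ v : (Fin N ⊕ Fin N) → ZMod k,
        (fun i => f i ((M.map (Int.cast : ℤ → ZMod k)).mulVec v i)) =
          (M.map (Int.cast : ℤ → ZMod k)).mulVec (fun i => f i (v i))) ↔
    (∃ u : (ZMod k)ˣ, ∀ (i : Fin N ⊕ Fin N) (x : ZMod k), f i x = (u : ZMod k) * x) := by
  constructor
  · intro h
    have : Nonempty (Fin N) := ⟨⟨0, hN⟩⟩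
    obtain ⟨g, hg⟩ := IsSymplecticEquivariant.exists_addMonoidHom_eq h
    obtain ⟨y, hy⟩ := (hf (.inl ⟨0, hN⟩)).surjective 1
    rw [hg, ZMod.addMonoidHom_apply_eq_mul] at hy
    refine ⟨(IsUnit.of_mul_eq_one y hy).unit, fun i x => ?_⟩
    rw [hg, IsUnit.unit_spec, ZMod.addMonoidHom_apply_eq_mul]
  · rintro ⟨u, hu⟩
    obtain rfl : f = fun _ x => (u : ZMod k) * x := funext fun i => funext (hu i)
    exact isSymplecticEquivariant_const_mul (u : ZMod k)

/-- A componentwise bijection `Φ(v) i = f i (v i)` of `(ℤ/kℤ)^{2N}` commutes with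
the action of every matrix of `Sp(2N,ℤ)` (acting by matrix-vector multiplication
after reducing the entries mod `k`) iff there is a single unit `u ∈ (ℤ/kℤ)ˣ` with
`f i x = u·x` for all `i` and `x`. -/
theorem symplectic_equivariant_componentwise_bijections {N : ℕ} (hN : 1 ≤ N)
    (k : ℕ) (hk : 1 ≤ k) (f : (Fin N ⊕ Fin N) → ZMod k → ZMod k)
    (hf : ∀ i, Function.Bijective (f i)) :
    (∀ M ∈ Matrix.symplecticGroup (Fin N) ℤ, ∀ v : (Fin N ⊕ Fin N) → ZMod k,
        (fun i => f i ((M.map (Int.cast : ℤ → ZMod k)).mulVec v i)) =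
          (M.map (Int.cast : ℤ → ZMod k)).mulVec (fun i => f i (v i))) ↔
    (∃ u : (ZMod k)ˣ, ∀ (i : Fin N ⊕ Fin N) (x : ZMod k), f i x = (u : ZMod k) * x) :=
  symplectic_equivariant_componentwise_bijections_general hN k f hf
end

section
/- Let G be a finite group and let r be a function assigning to each conjugacy class of G a representative element of that class. Then the number of orbits of G acting by simultaneous conjugation on the set of commuting pairs {(g,x) ∈ G × G : gx = xg} equals the sum, over all conjugacy classes c of G, of the number of conjugacy classes of the centralizer subgroup Z_{r(c)}. -/
/-!
Sending the orbit of a commuting pair `(g, x)` to the conjugacy class of `g` fibres the orbit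
set over `ConjClasses G`. Every orbit over the class of `g` contains a pair with first entry
exactly `g`, and two such pairs `(g, a)`, `(g, b)` lie in one orbit iff some `z` fixing `g`
conjugates `a` to `b`, i.e. iff `a` and `b` are conjugate in the centralizer of `g`. So the
fibre over the class of `g` is `ConjClasses (centralizer {g})`.
-/

section

open Subgroup

variable {G : Type*} [Group G]

abbrev CommutingPairs (G : Type*) [Group G] := {p : G × G // p.1 * p.2 = p.2 * p.1}

namespace CommutingPairs

def simultaneousConjSetoid : Setoid (CommutingPairs G) where
  r p q := ∃ z : G, z * p.1.1 * z⁻¹ = q.1.1 ∧ z * p.1.2 * z⁻¹ = q.1.2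
  iseqv :=
    { refl := fun _ => ⟨1, by simp, by simp⟩
      symm := fun ⟨z, h₁, h₂⟩ => ⟨z⁻¹, by rw [← h₁]; group, by rw [← h₂]; group⟩
      trans := fun ⟨z, h₁, h₂⟩ ⟨w, h₃, h₄⟩ =>
        ⟨w * z, by rw [← h₃, ← h₁]; group, by rw [← h₄, ← h₂]; group⟩ }

local instance : Setoid (CommutingPairs G) := simultaneousConjSetoid

abbrev Orbits (G : Type*) [Group G] := Quotient (simultaneousConjSetoid (G := G))

def fstConjClass : Orbits G → ConjClasses G :=
  Quotient.lift (fun p => ConjClasses.mk p.1.1) fun _ _ ⟨z, h, _⟩ =>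
    ConjClasses.mk_eq_mk_iff_isConj.mpr (isConj_iff.mpr ⟨z, h⟩)

def pairOf (g : G) (x : centralizer {g}) : CommutingPairs G :=
  ⟨(g, x), (mem_centralizer_singleton_iff.mp x.2).symm⟩

theorem pairOf_equiv_pairOf_iff {g : G} {a b : centralizer {g}} :
    pairOf g a ≈ pairOf g b ↔ IsConj a b := by
  constructor
  · rintro ⟨z, hzg, hab⟩
    have hz : z ∈ centralizer {g} :=
      mem_centralizer_singleton_iff.mpr (mul_inv_eq_iff_eq_mul.mp hzg)
    exact isConj_iff.mpr ⟨⟨z, hz⟩, Subtype.ext hab⟩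
  · intro hab
    obtain ⟨⟨z, hz⟩, hzab⟩ := isConj_iff.mp hab
    exact ⟨z, mul_inv_eq_iff_eq_mul.mpr (mem_centralizer_singleton_iff.mp hz),
      congrArg Subtype.val hzab⟩

theorem exists_pairOf_equiv {g : G} (p : CommutingPairs G) (hg : IsConj g p.1.1) :
    ∃ x : centralizer {g}, pairOf g x ≈ p := by
  obtain ⟨⟨h, y⟩, hy⟩ := p
  obtain ⟨z, rfl⟩ := isConj_iff.mp hg
  have hx : z⁻¹ * y * z ∈ centralizer {g} := by
    rw [mem_centralizer_singleton_iff]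
    calc z⁻¹ * y * z * g = z⁻¹ * (y * (z * g * z⁻¹)) * z := by group
      _ = z⁻¹ * ((z * g * z⁻¹) * y) * z := by rw [hy]
      _ = g * (z⁻¹ * y * z) := by group
  exact ⟨⟨_, hx⟩, z, rfl, show z * (z⁻¹ * y * z) * z⁻¹ = y by group⟩

noncomputable def conjClassesCentralizerEquivFiber (g : G) :
    ConjClasses (centralizer {g}) ≃ {q : Orbits G // fstConjClass q = ConjClasses.mk g} :=
  Equiv.ofBijective
    (Quotient.lift (fun x => ⟨⟦pairOf g x⟧, rfl⟩) fun _ _ hab =>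
      Subtype.ext (Quotient.sound (pairOf_equiv_pairOf_iff.mpr hab)))
    ⟨by
      rintro ⟨a⟩ ⟨b⟩ hab
      exact Quotient.sound <|
        pairOf_equiv_pairOf_iff.mp (Quotient.exact (congrArg Subtype.val hab)),
    by
      rintro ⟨⟨p⟩, hp⟩
      obtain ⟨x, hx⟩ := exists_pairOf_equiv p (ConjClasses.mk_eq_mk_iff_isConj.mp hp.symm)
      exact ⟨ConjClasses.mk x, Subtype.ext (Quotient.sound hx)⟩⟩

noncomputable def orbitsEquivSigmaConjClassesCentralizer (r : ConjClasses G → G)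
    (hr : ∀ c, ConjClasses.mk (r c) = c) :
    Orbits G ≃ Σ c : ConjClasses G, ConjClasses (centralizer {r c}) :=
  (Equiv.sigmaFiberEquiv fstConjClass).symm.trans <| Equiv.sigmaCongrRight fun c =>
    (Equiv.subtypeEquivRight fun q => by rw [hr c]).trans
      (conjClassesCentralizerEquivFiber (r c)).symm

end CommutingPairs

end

/-- The number of orbits of a finite group `G` acting by simultaneous conjugation
on the set of commuting pairs equals the sum, over all conjugacy classes `c` of
`G` (with chosen representatives `r c`), of the number of conjugacy classes of
the centralizer `Z_{r c}`. -/
theorem card_commuting_pair_orbits_eq_sum_card_conjClasses_centralizer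
    {G : Type*} [Group G] [Fintype G] (r : ConjClasses G → G)
    (hr : ∀ c, ConjClasses.mk (r c) = c) :
    Nat.card (Quot (fun p q : {p : G × G // p.1 * p.2 = p.2 * p.1} =>
        ∃ z : G, z * p.1.1 * z⁻¹ = q.1.1 ∧ z * p.1.2 * z⁻¹ = q.1.2)) =
    ∑ᶠ c : ConjClasses G, Nat.card (ConjClasses (Subgroup.centralizer {r c})) := by
  have := Fintype.ofFinite (ConjClasses G)
  rw [finsum_eq_sum_of_fintype, ← Nat.card_sigma]
  exact Nat.card_congr (CommutingPairs.orbitsEquivSigmaConjClassesCentralizer r hr)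
end
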